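/- arXiv:2410.15848 — 7 statements merged into one kernel-verified Lean document; each statement's English description precedes it below -/
import Mathlib

section
/- Let g be an element of an admissible group w.r.t. a prefix P (so both g and g⁻¹ are admissible) and let s ∈ S(P). Then for every y ∈ Y and all σ, σ' ∈ A(X) that agree on D_y, [ev_y]_{g(g⁻¹(σ)_s)} = [ev_y]_{g(g⁻¹(σ')_s)}; consequently, there exists a unique interpretation t ∈ S(P) such that σ_t = g(g⁻¹(σ)_s) for all σ ∈ A(X). (This shows that g(s) is well-defined.) -/
namespace DQBF

/-- Boolean formulas over variables `α`, modeled by their truth functions. -/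
abbrev BF (α : Type*) := (α → Bool) → Bool

/-- The evaluation formula of a variable `v`. -/
def ev {α : Type*} (v : α) : BF α := fun τ => τ v

/-- The assignment `g(σ)` induced by `g : BF(V) → BF(V)` and `σ ∈ A(V)`:
`g(σ)(v) = [g(ev_v)]_σ`. -/
def pushA {α : Type*} (g : BF α → BF α) (σ : α → Bool) : α → Bool :=
  fun v => g (ev v) σ

/-- `g` preserves propositional satisfiability: `[g(φ)]_σ = [φ]_{g(σ)}`. -/
def PreservesSat {α : Type*} (g : BF α → BF α) : Prop :=
  ∀ (φ : BF α) (σ : α → Bool), g φ σ = φ (pushA g σ)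

/-- A formula `F` depends only on the variables in `S`. -/
def DependsOnlyOn {α : Type*} (F : BF α) (S : Set α) : Prop :=
  ∀ τ τ' : α → Bool, (∀ v ∈ S, τ v = τ' v) → F τ = F τ'

variable {X Y : Type*}

/-- Extension of an assignment of the universal variables to all of `V = X ⊕ Y`
(with junk value `false` on `Y`). -/
def extendX (σ : X → Bool) : X ⊕ Y → Bool := Sum.elim σ fun _ => false

/-- The assignment `g(σ) ∈ A(X)` for `σ ∈ A(X)` and admissible `g`:
`g(σ)(x) = [g(ev_x)]_σ` (well-defined via any extension since `g(ev_x)` depends only on `X`). -/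
def pushX (g : BF (X ⊕ Y) → BF (X ⊕ Y)) (σ : X → Bool) : X → Bool :=
  fun x => g (ev (Sum.inl x)) (extendX σ)

/-- An interpretation for the prefix with dependency sets `D`: a family of Skolem
functions, each depending only on its dependency set. -/
structure Interp (D : Y → Set X) where
  sk : Y → BF X
  dep : ∀ y : Y, ∀ σ σ' : X → Bool, (∀ x ∈ D y, σ x = σ' x) → sk y σ = sk y σ'

/-- The induced assignment `σ_s ∈ A(X ⊕ Y)` of `σ ∈ A(X)` and `s ∈ S(P)`. -/
def induced {D : Y → Set X} (σ : X → Bool) (s : Interp D) : X ⊕ Y → Bool :=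
  Sum.elim σ fun y => s.sk y σ

/-- Truth value of the DQBF `P.φ` under the interpretation `s`:
`[P.φ]_s = ⊤` iff `[φ]_{σ_s} = ⊤` for every `σ ∈ A(X)`. -/
def Truth {D : Y → Set X} (φ : BF (X ⊕ Y)) (s : Interp D) : Prop :=
  ∀ σ : X → Bool, φ (induced σ s) = true

/-- A formula `F ∈ BF(Y)` depends on the universal variable `x` if it depends
semantically on some `y ∈ Y` with `x ∈ D_y`. -/
def DependsOn (D : Y → Set X) (F : BF (X ⊕ Y)) (x : X) : Prop :=
  ∃ y : Y, x ∈ D y ∧ ∃ τ τ' : X ⊕ Y → Bool,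
    (∀ v, v ≠ Sum.inr y → τ v = τ' v) ∧ F τ ≠ F τ'

/-- `g`, together with its two-sided inverse `g'`, is admissible w.r.t. the prefix `D`. -/
structure AdmissiblePair (D : Y → Set X) (g g' : BF (X ⊕ Y) → BF (X ⊕ Y)) : Prop where
  left_inv : ∀ φ, g' (g φ) = φ
  right_inv : ∀ φ, g (g' φ) = φ
  presSat : PreservesSat g
  varX : ∀ x : X, DependsOnlyOn (g (ev (Sum.inl x))) (Set.range Sum.inl)
  varY : ∀ y : Y, DependsOnlyOn (g (ev (Sum.inr y))) (Set.range Sum.inr)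
  depCond : ∀ (y : Y) (x : X), DependsOn D (g (ev (Sum.inr y))) x →
    DependsOnlyOn (g' (ev (Sum.inl x))) (Sum.inl '' D y)

/-- An admissible group w.r.t. the prefix `D`: a group (under composition) of
admissible functions. -/
structure AdmissibleGroup (D : Y → Set X) (G : Set (BF (X ⊕ Y) → BF (X ⊕ Y))) : Prop where
  id_mem : id ∈ G
  comp_mem : ∀ g ∈ G, ∀ h ∈ G, (g ∘ h) ∈ G
  inv_mem : ∀ g ∈ G, ∃ g' ∈ G, AdmissiblePair D g g'

/-- The associated group `G_sem` of a syntactic group `G`: all bijections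
`f : S(P) → S(P)` such that for all `s` and `σ` there is `g ∈ G` with
`g(σ)_{f(s)} = g(σ_s)`. -/
def Associated (D : Y → Set X) (G : Set (BF (X ⊕ Y) → BF (X ⊕ Y))) :
    Set (Interp D → Interp D) :=
  {f | Function.Bijective f ∧
    ∀ (s : Interp D) (σ : X → Bool), ∃ g ∈ G,
      induced (pushX g σ) (f s) = pushA g (induced σ s)}

/-- A group of bijections of `S(P)`. -/
structure BijGroup {D : Y → Set X} (G : Set (Interp D → Interp D)) : Prop where
  bij : ∀ f ∈ G, Function.Bijective f
  id_mem : id ∈ G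
  comp_mem : ∀ f ∈ G, ∀ h ∈ G, (f ∘ h) ∈ G
  inv_mem : ∀ f ∈ G, ∀ f', Function.LeftInverse f' f → Function.RightInverse f' f → f' ∈ G

/-- `ψ` is a conjunctive symmetry breaker for the group `G` of bijections of `S(P)`. -/
def ConjSymBreaker {D : Y → Set X} (G : Set (Interp D → Interp D)) (ψ : BF (X ⊕ Y)) : Prop :=
  ∀ s : Interp D, ∃ f ∈ G, Truth ψ (f s)


/-
Since `g(ev_y)` only reads existential variables, its value at `g⁻¹(σ)_s` is determined by the
Skolem values `s_{y'}(g⁻¹(σ))`, and only those `y'` on which `g(ev_y)` really depends matter.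
For such `y'` the formula `g(ev_y)` depends on every `x ∈ D_{y'}`, so admissibility makes
`g⁻¹(ev_x)` depend only on `D_y`; hence `g⁻¹(σ)` and `g⁻¹(σ')` agree on `D_{y'}` whenever `σ`
and `σ'` agree on `D_y`, and so do the Skolem values. This makes `σ ↦ [ev_y]_{g(g⁻¹(σ)_s)}` a
Skolem function for `y`, while on universal variables `g(g⁻¹(σ)_s)` is just `σ`.
-/

section DependsOn

variable {ι β : Type*} {α : ι → Type*} {f : (Π i, α i) → β}

theorem _root_.DependsOn.inter {s t : Set ι} (hs : _root_.DependsOn f s)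
    (ht : _root_.DependsOn f t) : _root_.DependsOn f (s ∩ t) := by
  classical
  intro x y hxy
  let z : Π i, α i := fun i => if i ∈ s then x i else y i
  calc f x = f z := hs fun i hi => by simp [z, hi]
    _ = f y := ht fun i hi => by
      by_cases his : i ∈ s
      · simp [z, his, hxy i ⟨his, hi⟩]
      · simp [z, his]

theorem _root_.DependsOn.diff_of_finite {s T : Set ι} (hf : _root_.DependsOn f s)
    (hT : T.Finite) (h : ∀ i ∈ T, _root_.DependsOn f {i}ᶜ) : _root_.DependsOn f (s \ T) := by
  induction T, hT using Set.Finite.induction_on with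
  | empty => simpa using hf
  | @insert a T _ _ ih =>
    rw [Set.insert_eq, Set.union_comm, ← Set.sdiff_sdiff, Set.sdiff_eq (s \ T)]
    exact (ih fun i hi => h i (Set.mem_insert_of_mem a hi)).inter (h a (Set.mem_insert a T))

end DependsOn

theorem dependsOnlyOn_iff_dependsOn {α : Type*} {F : BF α} {S : Set α} :
    DependsOnlyOn F S ↔ _root_.DependsOn F S :=
  ⟨fun h _ _ => h _ _, fun h _ _ => @h _ _⟩

theorem dependsOn_of_not_dependsOn_compl_inr {D : Y → Set X} {F : BF (X ⊕ Y)} {x : X} {y : Y}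
    (hx : x ∈ D y) (hF : ¬ _root_.DependsOn F {Sum.inr y}ᶜ) : DependsOn D F x := by
  simp only [_root_.DependsOn, Set.mem_compl_iff, Set.mem_singleton_iff, not_forall] at hF
  obtain ⟨τ, τ', hττ', hne⟩ := hF
  exact ⟨y, hx, τ, τ', hττ', hne⟩

theorem pushX_apply_eq_of_dependsOnlyOn {g : BF (X ⊕ Y) → BF (X ⊕ Y)} {x : X} {S : Set X}
    {σ σ' : X → Bool} (hg : DependsOnlyOn (g (ev (Sum.inl x))) (Sum.inl '' S))
    (hσ : ∀ x ∈ S, σ x = σ' x) :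
    pushX g σ x = pushX g σ' x :=
  hg _ _ <| by
    rintro _ ⟨x', hx', rfl⟩
    simp [extendX, hσ x' hx']

theorem Interp.ext_of_induced {D : Y → Set X} {t t' : Interp D}
    (h : ∀ σ, induced σ t = induced σ t') : t = t' := by
  obtain ⟨sk, _⟩ := t
  obtain ⟨sk', _⟩ := t'
  congr
  funext y σ
  exact congrFun (h σ) (Sum.inr y)

namespace AdmissiblePair

variable {D : Y → Set X} {g g' : BF (X ⊕ Y) → BF (X ⊕ Y)}

theorem pushA_induced_pushX_inr_eq [Finite Y] (hpair : AdmissiblePair D g g') (s : Interp D)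
    {y : Y} {σ σ' : X → Bool} (hσ : ∀ x ∈ D y, σ x = σ' x) :
    pushA g (induced (pushX g' σ) s) (Sum.inr y) =
      pushA g (induced (pushX g' σ') s) (Sum.inr y) := by
  set changed : Set (X ⊕ Y) :=
    Sum.inr '' {y' | s.sk y' (pushX g' σ) ≠ s.sk y' (pushX g' σ')}
  have hchanged : ∀ v ∈ changed, _root_.DependsOn (g (ev (Sum.inr y))) {v}ᶜ := by
    rintro _ ⟨y', hy', rfl⟩
    by_contra hsens
    exact hy' <| s.dep y' _ _ fun x hx => pushX_apply_eq_of_dependsOnlyOn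
      (hpair.depCond y x (dependsOn_of_not_dependsOn_compl_inr hx hsens)) hσ
  have hdep : _root_.DependsOn (g (ev (Sum.inr y))) (Set.range Sum.inr \ changed) :=
    (dependsOnlyOn_iff_dependsOn.mp (hpair.varY y)).diff_of_finite
      ((Set.toFinite _).image _) hchanged
  apply hdep
  rintro _ ⟨⟨y', rfl⟩, hy'⟩
  simpa [changed, induced] using hy'

/-- The interpretation `g(s)`. -/
def mapInterp [Finite Y] (hpair : AdmissiblePair D g g') (s : Interp D) : Interp D where
  sk y σ := pushA g (induced (pushX g' σ) s) (Sum.inr y)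
  dep _ _ _ := hpair.pushA_induced_pushX_inr_eq s

theorem pushA_induced_pushX_inl (hpair : AdmissiblePair D g g') (hg' : PreservesSat g')
    (s : Interp D) (σ : X → Bool) (x : X) :
    pushA g (induced (pushX g' σ) s) (Sum.inl x) = σ x := by
  have hX : g (ev (Sum.inl x)) (induced (pushX g' σ) s) =
      g (ev (Sum.inl x)) (pushA g' (extendX σ)) := by
    apply hpair.varX x
    rintro _ ⟨x', rfl⟩
    rfl
  calc pushA g (induced (pushX g' σ) s) (Sum.inl x)
      = g (ev (Sum.inl x)) (pushA g' (extendX σ)) := hX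
    _ = g' (g (ev (Sum.inl x))) (extendX σ) := (hg' _ _).symm
    _ = σ x := by rw [hpair.left_inv]; rfl

theorem induced_mapInterp [Finite Y] (hpair : AdmissiblePair D g g') (hg' : PreservesSat g')
    (s : Interp D) (σ : X → Bool) :
    induced σ (hpair.mapInterp s) = pushA g (induced (pushX g' σ) s) := by
  funext v
  cases v with
  | inl x => exact (hpair.pushA_induced_pushX_inl hg' s σ x).symm
  | inr y => rfl

end AdmissiblePair

theorem stmt_5_general {X Y : Type*} [Fintype Y] (D : Y → Set X)
    (g g' : BF (X ⊕ Y) → BF (X ⊕ Y))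
    (hpair : AdmissiblePair D g g') (hpair' : AdmissiblePair D g' g)
    (s : Interp D) :
    (∀ (y : Y) (σ σ' : X → Bool), (∀ x ∈ D y, σ x = σ' x) →
      pushA g (induced (pushX g' σ) s) (Sum.inr y) =
        pushA g (induced (pushX g' σ') s) (Sum.inr y)) ∧
    (∃! t : Interp D, ∀ σ : X → Bool,
      induced σ t = pushA g (induced (pushX g' σ) s)) := by
  have hmap := hpair.induced_mapInterp hpair'.presSat s
  refine ⟨fun y σ σ' => hpair.pushA_induced_pushX_inr_eq s, hpair.mapInterp s, hmap, ?_⟩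
  exact fun t ht => Interp.ext_of_induced fun σ => (ht σ).trans (hmap σ).symm

/-- well-definedness of `g(s)` for `g` in an admissible group. -/
theorem stmt_5 {X Y : Type*} [Fintype X] [Fintype Y] (D : Y → Set X)
    (G : Set (BF (X ⊕ Y) → BF (X ⊕ Y))) (hG : AdmissibleGroup D G)
    (g g' : BF (X ⊕ Y) → BF (X ⊕ Y)) (hg : g ∈ G) (hg' : g' ∈ G)
    (hpair : AdmissiblePair D g g') (hpair' : AdmissiblePair D g' g)
    (s : Interp D) :
    (∀ (y : Y) (σ σ' : X → Bool), (∀ x ∈ D y, σ x = σ' x) →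
      pushA g (induced (pushX g' σ) s) (Sum.inr y) =
        pushA g (induced (pushX g' σ') s) (Sum.inr y)) ∧
    (∃! t : Interp D, ∀ σ : X → Bool,
      induced σ t = pushA g (induced (pushX g' σ) s)) :=
  stmt_5_general D g g' hpair hpair' s

end DQBF
end

section
/- Let P.φ be a DQBF and let G_syn be an admissible group w.r.t. P. Then for every g ∈ G_syn and every interpretation s ∈ S(P), [P.g(φ)]_s = [P.φ]_{g(s)}. In particular, P.φ is true if and only if P.g(φ) is true, and s is a model of P.g(φ) if and only if g(s) is a model of P.φ. -/
/-!
Since `g` preserves satisfiability, `[g(φ)]_{σ'} = [φ]_{g(σ')}`; taking `σ' = g⁻¹(σ)_s`, and using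
that `σ ↦ g⁻¹(σ)` is a bijection of `A(X)`, gives `[P.g(φ)]_s = [P.φ]_{g(s)}`. For the converse
direction of the existence claim a model `s` of `P.φ` is transported to `g⁻¹(s)`, with Skolem
functions `σ ↦ [g⁻¹(ev_y)]_{g(σ)_s}`. These respect the dependency sets: `g⁻¹(ev_y)` only reads
the existential variables `y'` it is sensitive to (a Boolean function of finitely many variables
is determined by its sensitive coordinates), and for each such `y'` condition (3), applied to
`g⁻¹`, makes `g(σ)` restricted to `D_{y'}` a function of `σ` restricted to `D_y`.
-/

namespace DQBF

variable {X Y : Type*}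

section Sensitivity

variable {V : Type*}

def Sensitive (F : BF V) (v : V) : Prop :=
  ∃ ρ ρ' : V → Bool, (∀ w, w ≠ v → ρ w = ρ' w) ∧ F ρ ≠ F ρ'

theorem apply_eq_of_forall_not_sensitive (F : BF V) {s : Finset V}
    (hs : ∀ v ∈ s, ¬ Sensitive F v) {τ τ' : V → Bool} (h : ∀ v ∉ s, τ v = τ' v) :
    F τ = F τ' := by
  classical
  induction s using Finset.induction_on generalizing τ with
  | empty => rw [funext fun v => h v (Finset.notMem_empty v)]
  | @insert a s _ ih =>
    have h_update : F τ = F (Function.update τ a (τ' a)) := by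
      by_contra hne
      exact hs a (Finset.mem_insert_self a s)
        ⟨τ, _, fun w hw => (Function.update_of_ne hw _ _).symm, hne⟩
    rw [h_update]
    refine ih (fun v hv => hs v (Finset.mem_insert_of_mem hv)) fun v hv => ?_
    rcases eq_or_ne v a with rfl | hva
    · exact Function.update_self v _ τ
    · rw [Function.update_of_ne hva]
      exact h v (by simp [hva, hv])

theorem DependsOnlyOn.apply_eq_of_eqOn_sensitive {F : BF V} {S : Set V}
    (hF : DependsOnlyOn F S) (hS : S.Finite) {τ τ' : V → Bool}
    (h : ∀ v ∈ S, Sensitive F v → τ v = τ' v) : F τ = F τ' := by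
  classical
  calc F τ = F (S.piecewise τ τ') := hF _ _ fun v hv => by simp [hv]
    _ = F τ' := by
      refine apply_eq_of_forall_not_sensitive F (s := {v ∈ hS.toFinset | ¬ Sensitive F v})
        (fun v hv => (Finset.mem_filter.1 hv).2) fun v hv => ?_
      by_cases hvS : v ∈ S
      · rw [S.piecewise_eq_of_mem _ _ hvS]
        exact h v hvS (by simpa [hvS] using hv)
      · exact S.piecewise_eq_of_notMem _ _ hvS

end Sensitivity

theorem pushA_inv_pushA {V : Type*} {g g' : BF V → BF V} (hg : PreservesSat g)
    (hgg' : ∀ φ, g (g' φ) = φ) (τ : V → Bool) : pushA g' (pushA g τ) = τ :=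
  funext fun v => (hg (g' (ev v)) τ).symm.trans (congrFun (hgg' (ev v)) τ)

namespace AdmissiblePair

variable {D : Y → Set X} {g g' : BF (X ⊕ Y) → BF (X ⊕ Y)}

theorem symm {g'' : BF (X ⊕ Y) → BF (X ⊕ Y)} (P : AdmissiblePair D g g')
    (P' : AdmissiblePair D g' g'') : AdmissiblePair D g' g := by
  obtain rfl : g'' = g := funext fun φ => by simpa [P.left_inv] using P'.left_inv (g φ)
  exact P'

theorem pushX_eq_pushA (P : AdmissiblePair D g g') {σ : X → Bool} {τ : X ⊕ Y → Bool}
    (hτ : ∀ x, τ (Sum.inl x) = σ x) (x : X) : pushX g σ x = pushA g τ (Sum.inl x) :=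
  P.varX x _ _ fun _ ⟨x', hx'⟩ => hx' ▸ (hτ x').symm

theorem pushX_inv_pushX (P : AdmissiblePair D g g') (Q : AdmissiblePair D g' g)
    (σ : X → Bool) : pushX g' (pushX g σ) = σ :=
  funext fun x => by
    rw [Q.pushX_eq_pushA (σ := pushX g σ) (τ := pushA g (extendX σ))
      (fun x' => (P.pushX_eq_pushA (σ := σ) (fun _ => rfl) x').symm),
      pushA_inv_pushA P.presSat P.right_inv]
    rfl

/-- The interpretation `g(s)` of the paper, with `σ_{g(s)} = g(g⁻¹(σ)_s)` (`induced_act`). -/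
def act [Finite Y] (P : AdmissiblePair D g g') (s : Interp D) : Interp D where
  sk y σ := g (ev (Sum.inr y)) (induced (pushX g' σ) s)
  dep y σ σ' hσ :=
    (P.varY y).apply_eq_of_eqOn_sensitive (Set.finite_range _) fun _ ⟨y', hy'⟩ hsens => by
      subst hy'
      refine s.dep y' _ _ fun x hx => ?_
      exact P.depCond y x ⟨y', hx, hsens⟩ _ _ fun _ ⟨x', hx', hv⟩ => hv ▸ hσ x' hx'

theorem induced_act [Finite Y] (P : AdmissiblePair D g g') (Q : AdmissiblePair D g' g)
    (s : Interp D) (σ : X → Bool) :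
    induced σ (P.act s) = pushA g (induced (pushX g' σ) s) := by
  funext v
  rcases v with x | y
  · rw [← P.pushX_eq_pushA (σ := pushX g' σ) (fun _ => rfl), Q.pushX_inv_pushX P]
    rfl
  · rfl

theorem truth_apply_iff (P : AdmissiblePair D g g') (Q : AdmissiblePair D g' g)
    {s t : Interp D} (ht : ∀ σ, induced σ t = pushA g (induced (pushX g' σ) s))
    (φ : BF (X ⊕ Y)) : Truth (g φ) s ↔ Truth φ t := by
  have hsurj : Function.Surjective (pushX (Y := Y) g') :=
    fun σ => ⟨pushX g σ, P.pushX_inv_pushX Q σ⟩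
  simp only [Truth, ht, P.presSat φ]
  exact hsurj.forall

end AdmissiblePair

theorem stmt_7_general {X Y : Type*} [Fintype Y] (D : Y → Set X)
    (G : Set (BF (X ⊕ Y) → BF (X ⊕ Y))) (hG : AdmissibleGroup D G)
    (g g' : BF (X ⊕ Y) → BF (X ⊕ Y)) (hg' : g' ∈ G)
    (hpair : AdmissiblePair D g g')
    (gs : Interp D → Interp D)
    (hgs : ∀ (s : Interp D) (σ : X → Bool),
      induced σ (gs s) = pushA g (induced (pushX g' σ) s))
    (φ : BF (X ⊕ Y)) :
    (∀ s : Interp D, Truth (g φ) s ↔ Truth φ (gs s)) ∧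
    ((∃ s : Interp D, Truth φ s) ↔ (∃ s : Interp D, Truth (g φ) s)) := by
  obtain ⟨_, -, hpair'⟩ := hG.inv_mem g' hg'
  have hinv : AdmissiblePair D g' g := hpair.symm hpair'
  have h_gs : ∀ s, Truth (g φ) s ↔ Truth φ (gs s) := fun s =>
    hpair.truth_apply_iff hinv (hgs s) φ
  have h_inv_act : ∀ s, Truth (g φ) (hinv.act s) ↔ Truth φ s := fun s =>
    hpair.truth_apply_iff hinv (fun σ => by
      rw [hinv.induced_act hpair, hinv.pushX_inv_pushX hpair,
        pushA_inv_pushA hinv.presSat hinv.right_inv]) φ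
  exact ⟨h_gs, ⟨fun ⟨s, hs⟩ => ⟨hinv.act s, (h_inv_act s).2 hs⟩,
    fun ⟨s, hs⟩ => ⟨gs s, (h_gs s).1 hs⟩⟩⟩

/-- `[P.g(φ)]_s = [P.φ]_{g(s)}`; in particular `P.φ` is true iff
`P.g(φ)` is true, and `s` is a model of `P.g(φ)` iff `g(s)` is a model of `P.φ`. -/
theorem stmt_7 {X Y : Type*} [Fintype X] [Fintype Y] (D : Y → Set X)
    (G : Set (BF (X ⊕ Y) → BF (X ⊕ Y))) (hG : AdmissibleGroup D G)
    (g g' : BF (X ⊕ Y) → BF (X ⊕ Y)) (hg : g ∈ G) (hg' : g' ∈ G)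
    (hpair : AdmissiblePair D g g')
    (gs : Interp D → Interp D)
    (hgs : ∀ (s : Interp D) (σ : X → Bool),
      induced σ (gs s) = pushA g (induced (pushX g' σ) s))
    (φ : BF (X ⊕ Y)) :
    (∀ s : Interp D, Truth (g φ) s ↔ Truth φ (gs s)) ∧
    ((∃ s : Interp D, Truth φ s) ↔ (∃ s : Interp D, Truth (g φ) s)) :=
  stmt_7_general D G hG g g' hg' hpair gs hgs φ

end DQBF
end

section
/- Let G_syn be an admissible group w.r.t. a prefix P. Then for every g ∈ G_syn, the map S(P) → S(P), s ↦ g(s), belongs to the associated group of G_syn. -/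
namespace DQBF

variable {X Y : Type*}

theorem pushA_leftInverse_of_rightInverse {α : Type*} {g g' : BF α → BF α}
    (hps : PreservesSat g) (hinv : Function.RightInverse g' g) :
    Function.LeftInverse (pushA g') (pushA g) := fun τ => by
  funext v
  calc pushA g' (pushA g τ) v = g (g' (ev v)) τ := (hps _ _).symm
    _ = τ v := by rw [hinv]; rfl

theorem pushX_leftInverse_of_rightInverse {g g' : BF (X ⊕ Y) → BF (X ⊕ Y)}
    (hps : PreservesSat g) (hinv : Function.RightInverse g' g)
    (hvar : ∀ x : X, DependsOnlyOn (g' (ev (Sum.inl x))) (Set.range Sum.inl)) :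
    Function.LeftInverse (pushX g') (pushX g) := fun σ => by
  funext x
  -- `extendX (pushX g σ)` and `pushA g (extendX σ)` differ only on `Y`, which `g' (ev x)` ignores
  calc pushX g' (pushX g σ) x = g' (ev (Sum.inl x)) (pushA g (extendX σ)) :=
        hvar x _ _ (by rintro _ ⟨_, rfl⟩; rfl)
    _ = g (g' (ev (Sum.inl x))) (extendX σ) := (hps _ _).symm
    _ = σ x := by rw [hinv]; rfl

theorem Interp.sk_injective {D : Y → Set X} : Function.Injective (Interp.sk (D := D)) := by
  rintro ⟨s, _⟩ ⟨t, _⟩ rfl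
  rfl

instance {D : Y → Set X} [Finite X] [Finite Y] : Finite (Interp D) :=
  Finite.of_injective _ Interp.sk_injective

theorem Interp.ext_induced {D : Y → Set X} {s t : Interp D}
    (h : ∀ σ : X → Bool, induced σ s = induced σ t) : s = t :=
  Interp.sk_injective <| funext fun y => funext fun σ => congrFun (h σ) (Sum.inr y)

theorem injective_of_induced_pushX_eq_pushA {D : Y → Set X}
    {g g' : BF (X ⊕ Y) → BF (X ⊕ Y)} (hg : Function.LeftInverse (pushA g') (pushA g))
    {f : Interp D → Interp D}
    (hf : ∀ s σ, induced (pushX g σ) (f s) = pushA g (induced σ s)) :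
    Function.Injective f := fun s t hst =>
  Interp.ext_induced fun σ => hg.injective <| by rw [← hf, ← hf, hst]

/-- for `g ∈ G_syn`, the map `s ↦ g(s)` belongs to the associated
group of `G_syn`. -/
theorem stmt_8 {X Y : Type*} [Fintype X] [Fintype Y] (D : Y → Set X)
    (G : Set (BF (X ⊕ Y) → BF (X ⊕ Y))) (hG : AdmissibleGroup D G)
    (g g' : BF (X ⊕ Y) → BF (X ⊕ Y)) (hg : g ∈ G) (hg' : g' ∈ G)
    (hpair : AdmissiblePair D g g')
    (gs : Interp D → Interp D)
    (hgs : ∀ (s : Interp D) (σ : X → Bool),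
      induced σ (gs s) = pushA g (induced (pushX g' σ) s)) :
    gs ∈ Associated D G := by
  -- `g'` lies in `G`, hence is admissible, so each `g' (ev x)` depends only on `X`
  obtain ⟨_, -, hpair'⟩ := hG.inv_mem g' hg'
  have hX := pushX_leftInverse_of_rightInverse hpair.presSat hpair.right_inv hpair'.varX
  have hgs' : ∀ s σ, induced (pushX g σ) (gs s) = pushA g (induced σ s) := fun s σ => by
    rw [hgs, hX]
  refine ⟨?_, fun s σ => ⟨g, hg, hgs' s σ⟩⟩
  have hA := pushA_leftInverse_of_rightInverse hpair.presSat hpair.right_inv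
  exact Finite.injective_iff_bijective.mp (injective_of_induced_pushX_eq_pushA hA hgs')

end DQBF
end

section
/- Let G_syn be an admissible group w.r.t. a prefix P. Then the associated group G_sem of G_syn is a group of bijections of S(P): it contains the identity map, and it is closed under composition and under taking inverses. -/
/-!
If `g₂ ∈ G_syn` witnesses `f₂` at `(s, σ)` and `g₁` witnesses `f₁` at `(f₂ s, g₂(σ))`, then
`g₂ ∘ g₁` witnesses `f₁ ∘ f₂` at `(s, σ)`: admissible maps preserve propositional satisfiability
and send universal variables to formulas over `X`, so `(g₂ ∘ g₁)(σ) = g₁(g₂(σ))`.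
For inverses, `S(P)` is finite, so a bijection `f` of it has finite order `n` and its inverse
is the iterate `f^[n - 1]`, which lies in `G_sem` by closure under composition.
-/

namespace DQBF

variable {X Y : Type*}

theorem _root_.Function.LeftInverse.exists_eq_iterate {α : Type*} [Finite α] {f f' : α → α}
    (h : Function.LeftInverse f' f) (hf : Function.Bijective f) : ∃ n, f' = f^[n] := by
  let e : Equiv.Perm α := Equiv.ofBijective f hf
  have he : f^[orderOf e] = id := by
    change (⇑e)^[orderOf e] = id
    rw [← Equiv.Perm.coe_pow, pow_orderOf_eq_one, Equiv.Perm.coe_one]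
  refine ⟨orderOf e - 1, funext fun t => ?_⟩
  obtain ⟨s, rfl⟩ := hf.2 t
  rw [h s, ← Function.iterate_succ_apply, Nat.succ_eq_add_one,
    Nat.sub_add_cancel (orderOf_pos e), he, id]

theorem pushA_comp {g h : BF (X ⊕ Y) → BF (X ⊕ Y)} (hg : PreservesSat g) (τ : X ⊕ Y → Bool) :
    pushA (g ∘ h) τ = pushA h (pushA g τ) :=
  funext fun v => hg (h (ev v)) τ

theorem pushX_comp {g h : BF (X ⊕ Y) → BF (X ⊕ Y)} (hg : PreservesSat g)
    (hh : ∀ x : X, DependsOnlyOn (h (ev (Sum.inl x))) (Set.range Sum.inl)) (σ : X → Bool) :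
    pushX (g ∘ h) σ = pushX h (pushX g σ) := by
  funext x
  calc pushX (g ∘ h) σ x = h (ev (Sum.inl x)) (pushA g (extendX σ)) := hg _ _
    _ = pushX h (pushX g σ) x := hh x _ _ (by rintro _ ⟨_, rfl⟩; rfl)

instance [Finite X] [Finite Y] {D : Y → Set X} : Finite (Interp D) :=
  Finite.of_injective Interp.sk fun ⟨_, _⟩ ⟨_, _⟩ h => by cases h; rfl

namespace AdmissibleGroup

variable {D : Y → Set X} {G : Set (BF (X ⊕ Y) → BF (X ⊕ Y))}

theorem preservesSat_of_mem (hG : AdmissibleGroup D G) {g} (hg : g ∈ G) : PreservesSat g :=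
  (hG.inv_mem g hg).choose_spec.2.presSat

theorem dependsOnlyOn_inl_of_mem (hG : AdmissibleGroup D G) {g} (hg : g ∈ G) (x : X) :
    DependsOnlyOn (g (ev (Sum.inl x))) (Set.range Sum.inl) :=
  (hG.inv_mem g hg).choose_spec.2.varX x

theorem id_mem_associated (hG : AdmissibleGroup D G) : id ∈ Associated D G :=
  ⟨Function.bijective_id, fun _ _ => ⟨id, hG.id_mem, rfl⟩⟩

theorem comp_mem_associated (hG : AdmissibleGroup D G) {f₁ f₂ : Interp D → Interp D}
    (hf₁ : f₁ ∈ Associated D G) (hf₂ : f₂ ∈ Associated D G) : f₁ ∘ f₂ ∈ Associated D G := by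
  refine ⟨hf₁.1.comp hf₂.1, fun s σ => ?_⟩
  obtain ⟨g₂, hg₂, he₂⟩ := hf₂.2 s σ
  obtain ⟨g₁, hg₁, he₁⟩ := hf₁.2 (f₂ s) (pushX g₂ σ)
  refine ⟨g₂ ∘ g₁, hG.comp_mem g₂ hg₂ g₁ hg₁, ?_⟩
  rw [pushX_comp (hG.preservesSat_of_mem hg₂) (hG.dependsOnlyOn_inl_of_mem hg₁),
    pushA_comp (hG.preservesSat_of_mem hg₂), ← he₂]
  exact he₁

theorem iterate_mem_associated (hG : AdmissibleGroup D G) {f : Interp D → Interp D}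
    (hf : f ∈ Associated D G) (n : ℕ) : f^[n] ∈ Associated D G := by
  induction n with
  | zero => exact hG.id_mem_associated
  | succ n ih => rw [Function.iterate_succ]; exact hG.comp_mem_associated ih hf

theorem mem_associated_of_leftInverse [Finite X] [Finite Y] (hG : AdmissibleGroup D G)
    {f f' : Interp D → Interp D} (hf : f ∈ Associated D G) (hf' : Function.LeftInverse f' f) :
    f' ∈ Associated D G := by
  obtain ⟨n, rfl⟩ := hf'.exists_eq_iterate hf.1
  exact hG.iterate_mem_associated hf n

end AdmissibleGroup

/-- the associated group of an admissible group is a group of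
bijections of `S(P)`. -/
theorem stmt_9 {X Y : Type*} [Fintype X] [Fintype Y] (D : Y → Set X)
    (G : Set (BF (X ⊕ Y) → BF (X ⊕ Y))) (hG : AdmissibleGroup D G) :
    ((id : Interp D → Interp D) ∈ Associated D G) ∧
    (∀ f ∈ Associated D G, ∀ f'' ∈ Associated D G, (f ∘ f'') ∈ Associated D G) ∧
    (∀ f ∈ Associated D G, ∀ f' : Interp D → Interp D,
      Function.LeftInverse f' f → Function.RightInverse f' f → f' ∈ Associated D G) ∧
    (∀ f ∈ Associated D G, Function.Bijective f) :=
  ⟨hG.id_mem_associated, fun _ hf _ hf'' => hG.comp_mem_associated hf hf'',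
    fun _ hf _ hf' _ => hG.mem_associated_of_leftInverse hf hf', fun _ hf => hf.1⟩

end DQBF
end

section
/- Let P.φ be a DQBF, let G_sem be a semantic symmetry group for P.φ, and let ψ ∈ BF(V) be a conjunctive symmetry breaker for G_sem. Then P.φ is true if and only if P.(φ ∧ ψ) is true, where φ ∧ ψ denotes the pointwise conjunction. -/
namespace DQBF

variable {X Y : Type*}

theorem truth_and_iff {D : Y → Set X} {φ ψ : BF (X ⊕ Y)} {s : Interp D} :
    Truth (fun τ => φ τ && ψ τ) s ↔ Truth φ s ∧ Truth ψ s := by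
  simp only [Truth, Bool.and_eq_true, forall_and]

theorem ConjSymBreaker.exists_truth_and {D : Y → Set X} {φ ψ : BF (X ⊕ Y)}
    {G : Set (Interp D → Interp D)} (hbrk : ConjSymBreaker G ψ)
    (hsym : ∀ f ∈ G, ∀ s : Interp D, Truth φ s ↔ Truth φ (f s))
    {s : Interp D} (hs : Truth φ s) :
    ∃ s' : Interp D, Truth (fun τ => φ τ && ψ τ) s' := by
  obtain ⟨f, hf, hψ⟩ := hbrk s
  exact ⟨f s, truth_and_iff.mpr ⟨(hsym f hf s).mp hs, hψ⟩⟩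

theorem stmt_13_general {X Y : Type*} (D : Y → Set X)
    (φ ψ : BF (X ⊕ Y)) (Gsem : Set (Interp D → Interp D))
    (hsym : ∀ f ∈ Gsem, ∀ s : Interp D, Truth φ s ↔ Truth φ (f s))
    (hbrk : ConjSymBreaker Gsem ψ) :
    (∃ s : Interp D, Truth φ s) ↔
      (∃ s : Interp D, Truth (fun τ => φ τ && ψ τ) s) :=
  ⟨fun ⟨_, hs⟩ => hbrk.exists_truth_and hsym hs,
    fun ⟨s, hs⟩ => ⟨s, (truth_and_iff.mp hs).1⟩⟩

/-- if `ψ` is a conjunctive symmetry breaker for a semantic symmetry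
group of `P.φ`, then `P.φ` is true iff `P.(φ ∧ ψ)` is true. -/
theorem stmt_13 {X Y : Type*} [Fintype X] [Fintype Y] (D : Y → Set X)
    (φ ψ : BF (X ⊕ Y)) (Gsem : Set (Interp D → Interp D))
    (hgrp : BijGroup Gsem)
    (hsym : ∀ f ∈ Gsem, ∀ s : Interp D, Truth φ s ↔ Truth φ (f s))
    (hbrk : ConjSymBreaker Gsem ψ) :
    (∃ s : Interp D, Truth φ s) ↔
      (∃ s : Interp D, Truth (fun τ => φ τ && ψ τ) s) :=
  stmt_13_general D φ ψ Gsem hsym hbrk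

end DQBF
end

section
/- Let P be a prefix for X and Y with dependency sets (D_y)_{y∈Y}, let g be an element of an admissible group w.r.t. P, and let y_j ∈ Y and σ ∈ A(X) be such that σ(x) = [g(ev_x)]_σ for all x ∈ D_{y_j} and g(ev_{y_j}) depends only on {y_l ∈ Y : D_{y_l} = D_{y_j}}. Then [g(ev_{y_j})]_{σ_s} = [ev_{y_j}]_{σ_{g(s)}} for every interpretation s ∈ S(P). -/
/-!
If `g(ev_{y_j})` is sensitive to some `y_l` with `D_{y_l} = D_{y_j}`, admissibility makes every
`g⁻¹(ev_x)` with `x ∈ D_{y_j}` depend only on `D_{y_j}`, where `σ` and `g(σ)` agree; hence `σ` and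
`g⁻¹(σ)` agree on `D_{y_j}`, so `σ_s` and `g⁻¹(σ)_s` agree on all those `y_l`, which are the only
variables `g(ev_{y_j})` reads. Otherwise `g(ev_{y_j})` is insensitive to each of the finitely many
variables it depends on, so it is constant.
-/

namespace DQBF

variable {X Y : Type*}

section DependsOnlyOn

variable {α : Type*} {F : BF α}

theorem DependsOnlyOn.diff_singleton {S : Set α} {v : α} (hF : DependsOnlyOn F S)
    (hv : ∀ τ τ' : α → Bool, (∀ w, w ≠ v → τ w = τ' w) → F τ = F τ') :
    DependsOnlyOn F (S \ {v}) := by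
  classical
  intro τ τ' hτ
  calc F τ = F (Function.update τ v (τ' v)) :=
        hv _ _ fun w hw => (Function.update_of_ne hw _ _).symm
    _ = F τ' := hF _ _ fun w hw => by
        rcases eq_or_ne w v with rfl | hne
        · exact Function.update_self ..
        · rw [Function.update_of_ne hne]
          exact hτ w ⟨hw, hne⟩

theorem DependsOnlyOn.diff_of_finite {S T : Set α} (hT : T.Finite) (hF : DependsOnlyOn F S)
    (hins : ∀ v ∈ T, ∀ τ τ' : α → Bool, (∀ w, w ≠ v → τ w = τ' w) → F τ = F τ') :
    DependsOnlyOn F (S \ T) := by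
  induction T, hT using Set.Finite.induction_on with
  | empty => simpa using hF
  | @insert a T _ _ ih =>
    rw [Set.insert_eq, Set.union_comm, ← Set.sdiff_sdiff]
    exact (ih fun v hv => hins v (Or.inr hv)).diff_singleton (hins a (Or.inl rfl))

theorem DependsOnlyOn.eq_of_finite {S : Set α} (hS : S.Finite) (hF : DependsOnlyOn F S)
    (hins : ∀ v ∈ S, ∀ τ τ' : α → Bool, (∀ w, w ≠ v → τ w = τ' w) → F τ = F τ')
    (τ τ' : α → Bool) : F τ = F τ' :=
  (Set.sdiff_self ▸ hF.diff_of_finite hS hins) τ τ' fun _ hv => hv.elim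

end DependsOnlyOn

theorem pushX_eq_self_of_dependsOnlyOn {g g' : BF (X ⊕ Y) → BF (X ⊕ Y)}
    (hinv : ∀ φ, g (g' φ) = φ) (hsat : PreservesSat g) {A : Set X} {σ : X → Bool}
    (hσ : ∀ x ∈ A, σ x = pushX g σ x) {x : X}
    (hx : DependsOnlyOn (g' (ev (Sum.inl x))) (Sum.inl '' A)) :
    pushX g' σ x = σ x :=
  calc pushX g' σ x = g' (ev (Sum.inl x)) (extendX σ) := rfl
    _ = g' (ev (Sum.inl x)) (pushA g (extendX σ)) :=
        hx _ _ fun _ ⟨x', hx', hv⟩ => hv ▸ hσ x' hx'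
    _ = g (g' (ev (Sum.inl x))) (extendX σ) := (hsat _ _).symm
    _ = σ x := by rw [hinv]; rfl

theorem stmt_15_general {X Y : Type*} [Fintype Y] (D : Y → Set X)
    (g g' : BF (X ⊕ Y) → BF (X ⊕ Y))
    (hpair : AdmissiblePair D g g')
    (gs : Interp D → Interp D)
    (hgs : ∀ (s : Interp D) (σ : X → Bool),
      induced σ (gs s) = pushA g (induced (pushX g' σ) s))
    (yj : Y) (σ : X → Bool)
    (hσ : ∀ x ∈ D yj, σ x = pushX g σ x)
    (hdep : DependsOnlyOn (g (ev (Sum.inr yj))) (Sum.inr '' {l : Y | D l = D yj})) :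
    ∀ s : Interp D,
      g (ev (Sum.inr yj)) (induced σ s) = induced σ (gs s) (Sum.inr yj) := by
  intro s
  rw [hgs s σ]
  change _ = g (ev (Sum.inr yj)) (induced (pushX g' σ) s)
  by_cases hsens : ∃ l, D l = D yj ∧ ∃ τ τ' : X ⊕ Y → Bool,
      (∀ v, v ≠ Sum.inr l → τ v = τ' v) ∧ g (ev (Sum.inr yj)) τ ≠ g (ev (Sum.inr yj)) τ'
  · obtain ⟨l, hl, hl_sens⟩ := hsens
    have hfix : ∀ x ∈ D yj, σ x = pushX g' σ x := fun x hx =>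
      (pushX_eq_self_of_dependsOnlyOn hpair.right_inv hpair.presSat hσ
        (hpair.depCond yj x ⟨l, hl ▸ hx, hl_sens⟩)).symm
    exact hdep _ _ fun _ ⟨l', hl', hv⟩ => hv ▸ s.dep l' _ _ fun x hx => hfix x (hl' ▸ hx)
  · push Not at hsens
    exact hdep.eq_of_finite (Set.toFinite _) (fun _ ⟨l, hl, hv⟩ => hv ▸ hsens l hl) _ _

/-- Lemma same-path: if `σ(x) = [g(ev_x)]_σ` on `D_{y_j}` and
`g(ev_{y_j})` depends only on `{y_l : D_{y_l} = D_{y_j}}`, then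
`[g(ev_{y_j})]_{σ_s} = [ev_{y_j}]_{σ_{g(s)}}` for every interpretation `s`. -/
theorem stmt_15 {X Y : Type*} [Fintype X] [Fintype Y] (D : Y → Set X)
    (G : Set (BF (X ⊕ Y) → BF (X ⊕ Y))) (hG : AdmissibleGroup D G)
    (g g' : BF (X ⊕ Y) → BF (X ⊕ Y)) (hg : g ∈ G) (hg' : g' ∈ G)
    (hpair : AdmissiblePair D g g')
    (gs : Interp D → Interp D)
    (hgs : ∀ (s : Interp D) (σ : X → Bool),
      induced σ (gs s) = pushA g (induced (pushX g' σ) s))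
    (yj : Y) (σ : X → Bool)
    (hσ : ∀ x ∈ D yj, σ x = pushX g σ x)
    (hdep : DependsOnlyOn (g (ev (Sum.inr yj))) (Sum.inr '' {l : Y | D l = D yj})) :
    ∀ s : Interp D,
      g (ev (Sum.inr yj)) (induced σ s) = induced σ (gs s) (Sum.inr yj) :=
  stmt_15_general D g g' hpair gs hgs yj σ hσ hdep

end DQBF
end

section
/- Let P be a topologically sorted prefix with Y = {y_1,…,y_k} and dependency sets D_1,…,D_k ⊆ X, and let g : BF(V) → BF(V) satisfy: for all i, j ∈ {1,…,k}, if D_i and D_j are incomparable and g(ev_{y_i}) ≠ ev_{y_i}, then g(ev_{y_j}) = ev_{y_j} and g(ev_x) = ev_x for every x ∈ D_j \ D_i. Then for every i ∈ {1,…,k} and every assignment τ ∈ A(V), the truth value of the implication ((∀ x ∈ D_i, τ(x) = [g(ev_x)]_τ) ∧ (∀ j < i, τ(y_j) = [g(ev_{y_j})]_τ)) → (τ(y_i) = true → [g(ev_{y_i})]_τ = true) equals the truth value of the same implication with D_i replaced by D_1 ∪ ⋯ ∪ D_i in the first conjunction. -/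
namespace DQBF

variable {X Y : Type*}

theorem not_subset_and_not_subset_of_le {ι α : Type*} [Preorder ι] {D : ι → Set α}
    (hsorted : ∀ i j : ι, D i ⊂ D j → i < j) {i j : ι} (hji : j ≤ i) {x : α}
    (hxj : x ∈ D j) (hxi : x ∉ D i) : ¬ D i ⊆ D j ∧ ¬ D j ⊆ D i :=
  ⟨fun hij => (hsorted i j ⟨hij, fun hji' => hxi (hji' hxj)⟩).not_ge hji,
    fun hji' => hxi (hji' hxj)⟩

theorem eq_ev_of_mem_biUnion_of_notMem {ι α : Type*} [Preorder ι] {D : ι → Set α}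
    (hsorted : ∀ i j : ι, D i ⊂ D j → i < j) {g : BF (α ⊕ ι) → BF (α ⊕ ι)}
    (c3 : ∀ i j : ι, (¬ D i ⊆ D j ∧ ¬ D j ⊆ D i) →
      g (ev (Sum.inr i)) ≠ ev (Sum.inr i) →
      g (ev (Sum.inr j)) = ev (Sum.inr j) ∧
        ∀ x ∈ D j \ D i, g (ev (Sum.inl x)) = ev (Sum.inl x))
    {i : ι} (hgi : g (ev (Sum.inr i)) ≠ ev (Sum.inr i)) {x : α}
    (hx : x ∈ ⋃ j ∈ {j : ι | j ≤ i}, D j) (hxi : x ∉ D i) :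
    g (ev (Sum.inl x)) = ev (Sum.inl x) := by
  obtain ⟨j, hji, hxj⟩ := Set.mem_iUnion₂.mp hx
  exact (c3 i j (not_subset_and_not_subset_of_le hsorted hji hxj hxi) hgi).2 x ⟨hxj, hxi⟩

theorem stmt_17_general {X : Type*} {k : ℕ} (D : Fin k → Set X)
    (hsorted : ∀ i j : Fin k, D i ⊂ D j → i < j)
    (g : BF (X ⊕ Fin k) → BF (X ⊕ Fin k))
    (c3 : ∀ i j : Fin k, (¬ D i ⊆ D j ∧ ¬ D j ⊆ D i) →
      g (ev (Sum.inr i)) ≠ ev (Sum.inr i) →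
      g (ev (Sum.inr j)) = ev (Sum.inr j) ∧
        ∀ x ∈ D j \ D i, g (ev (Sum.inl x)) = ev (Sum.inl x)) :
    ∀ (i : Fin k) (τ : X ⊕ Fin k → Bool),
      ((((∀ x ∈ D i, τ (Sum.inl x) = g (ev (Sum.inl x)) τ) ∧
          (∀ j : Fin k, j < i → τ (Sum.inr j) = g (ev (Sum.inr j)) τ)) →
          (τ (Sum.inr i) = true → g (ev (Sum.inr i)) τ = true))
        ↔
       (((∀ x ∈ ⋃ j ∈ {j : Fin k | j ≤ i}, D j, τ (Sum.inl x) = g (ev (Sum.inl x)) τ) ∧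
          (∀ j : Fin k, j < i → τ (Sum.inr j) = g (ev (Sum.inr j)) τ)) →
          (τ (Sum.inr i) = true → g (ev (Sum.inr i)) τ = true))) := by
  intro i τ
  refine ⟨fun h hU => h ⟨fun x hx => hU.1 x (Set.mem_biUnion (le_refl i) hx), hU.2⟩,
    fun h hD hyi => ?_⟩
  by_cases hgi : g (ev (Sum.inr i)) = ev (Sum.inr i)
  · rwa [hgi]
  refine h ⟨fun x hx => ?_, hD.2⟩ hyi
  by_cases hxi : x ∈ D i
  · exact hD.1 x hxi
  · rw [eq_ev_of_mem_biUnion_of_notMem hsorted c3 hgi hx hxi]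
    rfl

/-- in the symmetry-breaker subformula for `y_i`, the equivalence
block over `D_i` may be replaced by one over `D_1 ∪ ⋯ ∪ D_i`. -/
theorem stmt_17 {X : Type*} [Fintype X] [DecidableEq X] {k : ℕ} (D : Fin k → Set X)
    (hsorted : ∀ i j : Fin k, D i ⊂ D j → i < j)
    (g : BF (X ⊕ Fin k) → BF (X ⊕ Fin k))
    (c3 : ∀ i j : Fin k, (¬ D i ⊆ D j ∧ ¬ D j ⊆ D i) →
      g (ev (Sum.inr i)) ≠ ev (Sum.inr i) →
      g (ev (Sum.inr j)) = ev (Sum.inr j) ∧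
        ∀ x ∈ D j \ D i, g (ev (Sum.inl x)) = ev (Sum.inl x)) :
    ∀ (i : Fin k) (τ : X ⊕ Fin k → Bool),
      ((((∀ x ∈ D i, τ (Sum.inl x) = g (ev (Sum.inl x)) τ) ∧
          (∀ j : Fin k, j < i → τ (Sum.inr j) = g (ev (Sum.inr j)) τ)) →
          (τ (Sum.inr i) = true → g (ev (Sum.inr i)) τ = true))
        ↔
       (((∀ x ∈ ⋃ j ∈ {j : Fin k | j ≤ i}, D j, τ (Sum.inl x) = g (ev (Sum.inl x)) τ) ∧
          (∀ j : Fin k, j < i → τ (Sum.inr j) = g (ev (Sum.inr j)) τ)) →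
          (τ (Sum.inr i) = true → g (ev (Sum.inr i)) τ = true))) :=
  stmt_17_general D hsorted g c3

end DQBF
end
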